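/- Irr(S) = 𝔐(X) \ Dom(Π_S) is a section (complete set of unique representatives) of the quotient 𝔐(X)/⟨S⟩ if and only if the term-rewriting system Π_S is convergent (terminating and confluent). -/
import Mathlib


namespace OpMon

/-- Letters of bracketed words: either a variable or a bracketed word. -/
inductive Letter (X : Type) : Type
  | of : X → Letter X
  | br : List (Letter X) → Letter X

/-- The free operated monoid `𝔐(X)`, modeled as lists of letters (free monoid on letters). -/
abbrev M (X : Type) := List (Letter X)

/-- The operator `⌊ ⌋` on `𝔐(X)`. -/
def L {X : Type} (w : M X) : M X := [Letter.br w]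

mutual
  /-- Substitute each variable by a word (letter version). -/
  def bindL {Y Z : Type} : Letter Y → (Y → M Z) → M Z
    | .of y, f => f y
    | .br w, f => [.br (bindW w f)]
  /-- Substitute each variable by a word (word version). -/
  def bindW {Y Z : Type} : M Y → (Y → M Z) → M Z
    | [], _ => []
    | a :: as, f => bindL a f ++ bindW as f
end

mutual
  /-- Count occurrences of variables satisfying `p` (letter version). -/
  def cntL {Y : Type} (p : Y → Bool) : Letter Y → ℕ
    | .of y => if p y then 1 else 0
    | .br w => cntW p w
  /-- Count occurrences of variables satisfying `p` (word version). -/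
  def cntW {Y : Type} (p : Y → Bool) : M Y → ℕ
    | [] => 0
    | a :: as => cntL p a + cntW p as
end

/-- The star letter `⋆`, modeled as `none`. -/
def starW {X : Type} : M (Option X) := [Letter.of none]

/-- `q` is a `⋆`-bracketed word: exactly one occurrence of `⋆`. -/
def IsStar {X : Type} (q : M (Option X)) : Prop :=
  cntW (fun o => o.isNone) q = 1

/-- Substitution `q|_u` of `u` for `⋆`. -/
def sub {X : Type} (q : M (Option X)) (u : M X) : M X :=
  bindW q (fun o => Option.elim o u (fun x => [Letter.of x]))

/-- Embed `𝔐(X)` into `𝔐(X ∪ {⋆})`. -/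
def emb {X : Type} (w : M X) : M (Option X) :=
  bindW w (fun x => [Letter.of (some x)])

/-- Substitute a `⋆`-word `r` for the `⋆` of `q`, yielding a word on `X ∪ {⋆}`. -/
def subS {X : Type} (q r : M (Option X)) : M (Option X) :=
  bindW q (fun o => Option.elim o r (fun x => [Letter.of (some x)]))

/-- `p` is a `(⋆₁,⋆₂)`-bracketed word (⋆₁ = `none`, ⋆₂ = `some none`). -/
def IsStar2 {X : Type} (p : M (Option (Option X))) : Prop :=
  cntW (fun o => o.isNone) p = 1 ∧
  cntW (fun o => match o with | some none => true | _ => false) p = 1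

/-- Substitution `p|_{u₁,u₂}`. -/
def sub2 {X : Type} (p : M (Option (Option X))) (u₁ u₂ : M X) : M X :=
  bindW p (fun o => match o with
    | none => u₁
    | some none => u₂
    | some (some x) => [Letter.of x])

/-- Substitution `p|_{u₁,⋆₂}`, a `⋆`-word. -/
def sub2L {X : Type} (p : M (Option (Option X))) (u₁ : M X) : M (Option X) :=
  bindW p (fun o => match o with
    | none => emb u₁
    | some none => [Letter.of none]
    | some (some x) => [Letter.of (some x)])

/-- Substitution `p|_{⋆₁,u₂}`, a `⋆`-word. -/
def sub2R {X : Type} (p : M (Option (Option X))) (u₂ : M X) : M (Option X) :=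
  bindW p (fun o => match o with
    | none => [Letter.of none]
    | some none => emb u₂
    | some (some x) => [Letter.of (some x)])

/-- `R^c`. -/
def Rc {X : Type} (R : Set (M X × M X)) : Set (M X × M X) :=
  {p | ∃ q a b, IsStar q ∧ (a, b) ∈ R ∧ p = (sub q a, sub q b)}

/-- Inverse relation `R⁻¹`. -/
def relInv {X : Type} (R : Set (M X × M X)) : Set (M X × M X) :=
  {p | (p.2, p.1) ∈ R}

/-- Closure under right mult. (C1), left mult. (C2), and the operator (C3). -/
def Closed {X : Type} (S : Set (M X × M X)) : Prop :=
  ∀ a b, (a, b) ∈ S → ∀ c : M X,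
    (a ++ c, b ++ c) ∈ S ∧ (c ++ a, c ++ b) ∈ S ∧ (L a, L b) ∈ S

/-- Composition of relations. -/
def relComp {X : Type} (R S : Set (M X × M X)) : Set (M X × M X) :=
  {p | ∃ c, (p.1, c) ∈ R ∧ (c, p.2) ∈ S}

/-- `relPow R n = R^(n+1)`. -/
def relPow {X : Type} (R : Set (M X × M X)) : ℕ → Set (M X × M X)
  | 0 => R
  | n + 1 => relComp (relPow R n) R

/-- Operated congruence. -/
def IsOpCong {X : Type} (T : Set (M X × M X)) : Prop :=
  (∀ a, (a, a) ∈ T) ∧ (∀ a b, (a, b) ∈ T → (b, a) ∈ T) ∧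
  (∀ a b c, (a, b) ∈ T → (b, c) ∈ T → (a, c) ∈ T) ∧ Closed T

/-- The operated congruence `⟨R⟩` generated by `R`. -/
def ocong {X : Type} (R : Set (M X × M X)) : Set (M X × M X) :=
  ⋂₀ {T | IsOpCong T ∧ R ⊆ T}

/-- Equivalence relation (as a set of pairs). -/
def IsEqv {X : Type} (T : Set (M X × M X)) : Prop :=
  (∀ a, (a, a) ∈ T) ∧ (∀ a b, (a, b) ∈ T → (b, a) ∈ T) ∧
  (∀ a b c, (a, b) ∈ T → (b, c) ∈ T → (a, c) ∈ T)

/-- The equivalence `T^e` generated by `T`. -/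
def eqgen {X : Type} (T : Set (M X × M X)) : Set (M X × M X) :=
  ⋂₀ {E | IsEqv E ∧ T ⊆ E}

/-- A monomial order: a well-founded linear order compatible with the operations. -/
def IsMonomialOrder {X : Type} (lt : M X → M X → Prop) : Prop :=
  WellFounded lt ∧
  (∀ a b, a = b ∨ lt a b ∨ lt b a) ∧
  (∀ a b c, lt a b → lt b c → lt a c) ∧
  (∀ u v w, lt u v → lt (u ++ w) (v ++ w) ∧ lt (w ++ u) (w ++ v) ∧ lt (L u) (L v))

/-- The term-rewriting system `Π_S`. -/
def PiS {X : Type} (lt : M X → M X → Prop) (S : Set (M X × M X)) : Set (M X × M X) :=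
  {p | ∃ q t v, IsStar q ∧ ((t, v) ∈ S ∨ (v, t) ∈ S) ∧ lt v t ∧ p = (sub q t, sub q v)}

/-- One-step rewriting. -/
def Rew {X : Type} (lt : M X → M X → Prop) (S : Set (M X × M X)) (a b : M X) : Prop :=
  (a, b) ∈ PiS lt S

/-- Joinability under `Π_S`. -/
def Joinable {X : Type} (lt : M X → M X → Prop) (S : Set (M X × M X)) (f g : M X) : Prop :=
  ∃ h, Relation.ReflTransGen (Rew lt S) f h ∧ Relation.ReflTransGen (Rew lt S) g h

/-- Termination of `Π_S`. -/
def Terminating {X : Type} (lt : M X → M X → Prop) (S : Set (M X × M X)) : Prop :=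
  ¬ ∃ f : ℕ → M X, ∀ n, Rew lt S (f n) (f (n + 1))

/-- Confluence of `Π_S`. -/
def Confluent {X : Type} (lt : M X → M X → Prop) (S : Set (M X × M X)) : Prop :=
  ∀ f g h, Relation.ReflTransGen (Rew lt S) f g → Relation.ReflTransGen (Rew lt S) f h →
    Joinable lt S g h

/-- Irreducible elements: `𝔐(X) \ Dom(Π_S)`. -/
def Irr {X : Type} (lt : M X → M X → Prop) (S : Set (M X × M X)) : Set (M X) :=
  {f | ∀ g, ¬ Rew lt S f g}

/-- Predecessors of `a`. -/
def Pre {X : Type} (lt : M X → M X → Prop) (S : Set (M X × M X)) (a : M X) : Set (M X) :=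
  {f | Relation.ReflTransGen (Rew lt S) f a}

/-- `W` is a section of `⟨S⟩`: every congruence class meets `W` in exactly one element. -/
def IsSection {X : Type} (S : Set (M X × M X)) (W : Set (M X)) : Prop :=
  ∀ a : M X, ∃! w, w ∈ W ∧ (a, w) ∈ ocong S

/-- Separated placements `(u₁,q₁)`, `(u₂,q₂)` in `w`. -/
def Separated {X : Type} (u₁ : M X) (q₁ : M (Option X)) (u₂ : M X) (q₂ : M (Option X))
    (w : M X) : Prop :=
  ∃ p, IsStar2 p ∧ q₁ = sub2R p u₂ ∧ q₂ = sub2L p u₁ ∧ w = sub2 p u₁ u₂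

/-- Nested placements: one context is a subcontext of the other. -/
def Nested {X : Type} (q₁ q₂ : M (Option X)) : Prop :=
  ∃ q, IsStar q ∧ (q₂ = subS q₁ q ∨ q₁ = subS q₂ q)

/-- Intersecting placements `(u₁,q₁)`, `(u₂,q₂)` in `w`. -/
def Intersecting {X : Type} (w u₁ : M X) (q₁ : M (Option X)) (u₂ : M X)
    (q₂ : M (Option X)) : Prop :=
  ∃ q a b c, IsStar q ∧ a ≠ ([] : M X) ∧ b ≠ ([] : M X) ∧ c ≠ ([] : M X) ∧
    w = sub q (a ++ b ++ c) ∧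
    ((q₁ = subS q (starW ++ emb c) ∧ q₂ = subS q (emb a ++ starW)) ∨
     (q₁ = subS q (emb a ++ starW) ∧ q₂ = subS q (starW ++ emb c)))

/-- Defining relations of the free `∗`-monoid. -/
def SStar (X : Type) : Set (M X × M X) :=
  {p | (∃ w : M X, p = (L (L w), w)) ∨
       (∃ u v : M X, u ≠ [] ∧ v ≠ [] ∧ p = (L (u ++ v), L v ++ L u)) ∨
       p = (L [], [])}

/-- Defining relations of the free group. -/
def SGrp (X : Type) : Set (M X × M X) :=
  {p | (∃ w : M X, p = (L (L w), w)) ∨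
       (∃ u v : M X, u ≠ [] ∧ v ≠ [] ∧ p = (L (u ++ v), L v ++ L u)) ∨
       (∃ w : M X, p = (L w ++ w, [])) ∨
       (∃ w : M X, p = (w ++ L w, []))}


section Aux

variable {X : Type}

theorem bindW_append {Y Z : Type} (a b : M Y) (f : Y → M Z) :
    bindW (a ++ b) f = bindW a f ++ bindW b f := by
  induction a with
  | nil => simp [bindW]
  | cons x xs ih => simp [bindW, ih]

theorem cntW_append {Y : Type} (p : Y → Bool) (a b : M Y) :
    cntW p (a ++ b) = cntW p a + cntW p b := by
  induction a with
  | nil => simp [cntW]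
  | cons x xs ih => simp [cntW, ih]; omega

mutual
theorem bindL_assoc {A B C : Type} (x : Letter A) (f : A → M B) (g : B → M C) :
    bindW (bindL x f) g = bindL x (fun a => bindW (f a) g) := by
  cases x with
  | of y => simp [bindL, bindW]
  | br w => simp [bindL, bindW, bindW_assoc w f g]
  termination_by sizeOf x
theorem bindW_assoc {A B C : Type} (w : M A) (f : A → M B) (g : B → M C) :
    bindW (bindW w f) g = bindW w (fun a => bindW (f a) g) := by
  cases w with
  | nil => simp [bindW]
  | cons x xs => simp [bindW, bindW_append, bindL_assoc x f g, bindW_assoc xs f g]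
  termination_by sizeOf w
end

mutual
theorem bindL_id (x : Letter X) : bindL x (fun a => [Letter.of a]) = [x] := by
  cases x with
  | of y => simp [bindL]
  | br w => simp [bindL, bindW_id w]
  termination_by sizeOf x
theorem bindW_id (w : M X) : bindW w (fun a => [Letter.of a]) = w := by
  cases w with
  | nil => simp [bindW]
  | cons x xs => simp [bindW, bindL_id x, bindW_id xs]
  termination_by sizeOf w
end

mutual
theorem cnt_embL (x : Letter X) :
    cntW (fun o => o.isNone) (bindL x (fun y : X => [Letter.of (some y)])) = 0 := by
  cases x with
  | of y => simp [bindL, cntW, cntL]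
  | br w =>
    have := cnt_embW w
    simp only [emb] at this
    simp [bindL, cntW, cntL, this]
  termination_by sizeOf x
theorem cnt_embW (w : M X) : cntW (fun o => o.isNone) (emb w) = 0 := by
  cases w with
  | nil => simp [emb, bindW, cntW]
  | cons x xs =>
    have := cnt_embW xs
    simp only [emb, bindW, cntW_append] at *
    simp [cnt_embL x, this]
  termination_by sizeOf w
end

/-- The substitution function used by `sub`. -/
def subF (u : M X) : Option X → M X := fun o => Option.elim o u (fun x => [Letter.of x])

theorem sub_eq (q : M (Option X)) (u : M X) : sub q u = bindW q (subF u) := rfl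

mutual
theorem bind_cnt0L (x : Letter (Option X)) (h : cntL (fun o => o.isNone) x = 0) (u v : M X) :
    bindL x (subF u) = bindL x (subF v) := by
  cases x with
  | of o =>
    cases o with
    | none => simp [cntL] at h
    | some y => simp [bindL, subF]
  | br w =>
    simp only [cntL] at h
    simp [bindL, bind_cnt0W w h u v]
  termination_by sizeOf x
theorem bind_cnt0W (w : M (Option X)) (h : cntW (fun o => o.isNone) w = 0) (u v : M X) :
    bindW w (subF u) = bindW w (subF v) := by
  cases w with
  | nil => rfl
  | cons x xs =>
    simp only [cntW] at h
    have h1 : cntL (fun o => o.isNone) x = 0 := by omega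
    have h2 : cntW (fun o => o.isNone) xs = 0 := by omega
    simp [bindW, bind_cnt0L x h1 u v, bind_cnt0W xs h2 u v]
  termination_by sizeOf w
end

variable {lt : M X → M X → Prop}

mutual
theorem sub_monoL (hlt : IsMonomialOrder lt) (x : Letter (Option X))
    (h : cntL (fun o => o.isNone) x = 1) {u v : M X} (huv : lt u v) :
    lt (bindL x (subF u)) (bindL x (subF v)) := by
  cases x with
  | of o =>
    cases o with
    | none => simpa [bindL, subF] using huv
    | some y => simp [cntL] at h
  | br w =>
    simp only [cntL] at h
    have := sub_monoW hlt w h huv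
    have h2 := (hlt.2.2.2 _ _ [] this).2.2
    simpa [bindL, L] using h2
  termination_by sizeOf x
theorem sub_monoW (hlt : IsMonomialOrder lt) (w : M (Option X))
    (h : cntW (fun o => o.isNone) w = 1) {u v : M X} (huv : lt u v) :
    lt (bindW w (subF u)) (bindW w (subF v)) := by
  cases w with
  | nil => simp [cntW] at h
  | cons x xs =>
    simp only [cntW] at h
    by_cases hx : cntW (fun o => o.isNone) xs = 0
    · have h1 : cntL (fun o => o.isNone) x = 1 := by omega
      have heq := bind_cnt0W xs hx u v
      have := sub_monoL hlt x h1 huv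
      have h2 := (hlt.2.2.2 _ _ (bindW xs (subF u)) this).1
      simpa [bindW, heq] using h2
    · have h1 : cntL (fun o => o.isNone) x = 0 := by omega
      have h2 : cntW (fun o => o.isNone) xs = 1 := by omega
      have heq := bind_cnt0L x h1 u v
      have := sub_monoW hlt xs h2 huv
      have h3 := (hlt.2.2.2 _ _ (bindL x (subF u)) this).2.1
      simpa [bindW, heq] using h3
  termination_by sizeOf w
end

end Aux


section Aux2

variable {X : Type} {lt : M X → M X → Prop} {S : Set (M X × M X)}

theorem ocong_isOpCong (S : Set (M X × M X)) : IsOpCong (ocong S) := by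
  refine ⟨?_, ?_, ?_, ?_⟩
  · intro a
    simp only [ocong, Set.mem_sInter]
    intro T hT; exact hT.1.1 a
  · intro a b h
    simp only [ocong, Set.mem_sInter] at *
    intro T hT; exact hT.1.2.1 a b (h T hT)
  · intro a b c h1 h2
    simp only [ocong, Set.mem_sInter] at *
    intro T hT; exact hT.1.2.2.1 a b c (h1 T hT) (h2 T hT)
  · intro a b h c
    simp only [ocong, Set.mem_sInter] at *
    refine ⟨?_, ?_, ?_⟩ <;> intro T hT
    · exact (hT.1.2.2.2 a b (h T hT) c).1
    · exact (hT.1.2.2.2 a b (h T hT) c).2.1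
    · exact (hT.1.2.2.2 a b (h T hT) c).2.2

theorem subset_ocong (S : Set (M X × M X)) : S ⊆ ocong S := by
  intro p hp
  simp only [ocong, Set.mem_sInter]
  exact fun T hT => hT.2 hp

theorem ocong_min {T : Set (M X × M X)} (hT : IsOpCong T) (hS : S ⊆ T) : ocong S ⊆ T :=
  fun p hp => (Set.mem_sInter.mp hp) T ⟨hT, hS⟩

mutual
theorem subCongL {T : Set (M X × M X)} (hT : IsOpCong T) {a b : M X} (hab : (a, b) ∈ T)
    (x : Letter (Option X)) : (bindL x (subF a), bindL x (subF b)) ∈ T := by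
  cases x with
  | of o =>
    cases o with
    | none => exact hab
    | some y => exact hT.1 _
  | br w =>
    have h := subCongW hT hab w
    have h2 := (hT.2.2.2 _ _ h []).2.2
    simpa [bindL, L, sub_eq] using h2
  termination_by sizeOf x
theorem subCongW {T : Set (M X × M X)} (hT : IsOpCong T) {a b : M X} (hab : (a, b) ∈ T)
    (w : M (Option X)) : (bindW w (subF a), bindW w (subF b)) ∈ T := by
  cases w with
  | nil => exact hT.1 _
  | cons x xs =>
    have h1 := subCongL hT hab x
    have h2 := subCongW hT hab xs
    have s1 := (hT.2.2.2 _ _ h1 (bindW xs (subF a))).1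
    have s2 := (hT.2.2.2 _ _ h2 (bindL x (subF b))).2.1
    have := hT.2.2.1 _ _ _ s1 s2
    simpa [bindW] using this
  termination_by sizeOf w
end

theorem isStar_starW : IsStar (starW (X := X)) := by
  simp [IsStar, starW, cntW, cntL]

theorem sub_starW (u : M X) : sub starW u = u := by
  simp [sub, starW, bindW, bindL]

theorem sub_appR (q : M (Option X)) (c u : M X) : sub (q ++ emb c) u = sub q u ++ c := by
  have hemb : sub (emb c) u = c := by
    show bindW (bindW c _) _ = c
    rw [bindW_assoc]
    refine (congrArg (bindW c) (funext fun x => ?_)).trans (bindW_id c)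
    simp [bindW, bindL, subF]
  show bindW _ _ = _
  rw [bindW_append]
  exact congrArg _ hemb

theorem sub_appL (q : M (Option X)) (c u : M X) : sub (emb c ++ q) u = c ++ sub q u := by
  have hemb : sub (emb c) u = c := by
    have := sub_appR [] c u
    simpa [sub, bindW] using this
  show bindW _ _ = _
  rw [bindW_append]
  exact congrArg (· ++ bindW q (subF u)) hemb

theorem isStar_appR {q : M (Option X)} (h : IsStar q) (c : M X) : IsStar (q ++ emb c) := by
  simp only [IsStar, cntW_append] at *
  rw [cnt_embW]; omega

theorem isStar_appL {q : M (Option X)} (h : IsStar q) (c : M X) : IsStar (emb c ++ q) := by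
  simp only [IsStar, cntW_append] at *
  rw [cnt_embW]; omega

theorem sub_br (q : M (Option X)) (u : M X) : sub [Letter.br q] u = L (sub q u) := by
  simp [sub, bindW, bindL, L]

theorem isStar_br {q : M (Option X)} (h : IsStar q) : IsStar [Letter.br q] := by
  simpa [IsStar, cntW, cntL] using h

theorem Rew_lt (hlt : IsMonomialOrder lt) {a b : M X} (h : Rew lt S a b) : lt b a := by
  obtain ⟨q, t, v, hq, _, hvt, heq⟩ := h
  simp only [Prod.mk.injEq] at heq
  obtain ⟨rfl, rfl⟩ := heq
  exact sub_monoW hlt q hq hvt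

theorem Rew_closed {a b : M X} (h : Rew lt S a b) (c : M X) :
    Rew lt S (a ++ c) (b ++ c) ∧ Rew lt S (c ++ a) (c ++ b) ∧ Rew lt S (L a) (L b) := by
  obtain ⟨q, t, v, hq, hc, hvt, heq⟩ := h
  simp only [Prod.mk.injEq] at heq
  obtain ⟨rfl, rfl⟩ := heq
  refine ⟨⟨q ++ emb c, t, v, isStar_appR hq c, hc, hvt, by rw [sub_appR, sub_appR]⟩,
    ⟨emb c ++ q, t, v, isStar_appL hq c, hc, hvt, by rw [sub_appL, sub_appL]⟩,
    ⟨[Letter.br q], t, v, isStar_br hq, hc, hvt, by rw [sub_br, sub_br]⟩⟩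

theorem Rew_ocong {a b : M X} (h : Rew lt S a b) : (a, b) ∈ ocong S := by
  obtain ⟨q, t, v, hq, hc, hvt, heq⟩ := h
  simp only [Prod.mk.injEq] at heq
  obtain ⟨rfl, rfl⟩ := heq
  have hbase : (t, v) ∈ ocong S := by
    rcases hc with hc | hc
    · exact subset_ocong S hc
    · exact (ocong_isOpCong S).2.1 _ _ (subset_ocong S hc)
  exact subCongW (ocong_isOpCong S) hbase q

theorem rtg_ocong {a b : M X} (h : Relation.ReflTransGen (Rew lt S) a b) :
    (a, b) ∈ ocong S := by
  induction h with
  | refl => exact (ocong_isOpCong S).1 a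
  | tail _ hbc ih => exact (ocong_isOpCong S).2.2.1 _ _ _ ih (Rew_ocong hbc)

theorem eqvGen_map {α : Type*} {r : α → α → Prop} {F : α → α}
    (hF : ∀ a b, r a b → r (F a) (F b)) {a b : α} (h : Relation.EqvGen r a b) :
    Relation.EqvGen r (F a) (F b) := by
  induction h with
  | rel a b h => exact .rel _ _ (hF _ _ h)
  | refl a => exact .refl _
  | symm _ _ _ ih => exact .symm _ _ ih
  | trans _ _ _ _ _ ih1 ih2 => exact .trans _ _ _ ih1 ih2

theorem ocong_subset_eqvGen (hlt : IsMonomialOrder lt) :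
    ocong S ⊆ {p : M X × M X | Relation.EqvGen (Rew lt S) p.1 p.2} := by
  apply ocong_min
  · refine ⟨fun a => .refl a, fun a b h => .symm _ _ h, fun a b c h1 h2 => .trans _ _ _ h1 h2, ?_⟩
    intro a b h c
    have h' : Relation.EqvGen (Rew lt S) a b := h
    exact ⟨eqvGen_map (r := Rew lt S) (F := (· ++ c)) (fun x y hxy => (Rew_closed hxy c).1) h',
      eqvGen_map (r := Rew lt S) (F := (c ++ ·)) (fun x y hxy => (Rew_closed hxy c).2.1) h',
      eqvGen_map (r := Rew lt S) (F := L) (fun x y hxy => (Rew_closed hxy c).2.2) h'⟩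
  · rintro ⟨a, b⟩ hab
    rcases hlt.2.1 a b with heq | hab' | hba'
    · exact heq ▸ Relation.EqvGen.refl a
    · refine Relation.EqvGen.symm _ _ (Relation.EqvGen.rel _ _ ?_)
      exact ⟨starW, b, a, isStar_starW, Or.inr hab, hab', by rw [sub_starW, sub_starW]⟩
    · refine Relation.EqvGen.rel _ _ ?_
      exact ⟨starW, a, b, isStar_starW, Or.inl hab, hba', by rw [sub_starW, sub_starW]⟩

theorem exists_nf (hlt : IsMonomialOrder lt) (S : Set (M X × M X)) (a : M X) :
    ∃ w, w ∈ Irr lt S ∧ Relation.ReflTransGen (Rew lt S) a w := by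
  refine hlt.1.induction (C := fun a => ∃ w, w ∈ Irr lt S ∧ Relation.ReflTransGen (Rew lt S) a w)
    a ?_
  intro a ih
  by_cases ha : a ∈ Irr lt S
  · exact ⟨a, ha, .refl⟩
  · simp only [Irr, Set.mem_setOf_eq, not_forall, not_not] at ha
    obtain ⟨b, hb⟩ := ha
    obtain ⟨w, hw, hwr⟩ := ih b (Rew_lt hlt hb)
    exact ⟨w, hw, .head hb hwr⟩

theorem irr_no_step {w h : M X} (hw : w ∈ Irr lt S)
    (hr : Relation.ReflTransGen (Rew lt S) w h) : w = h := by
  rcases Relation.ReflTransGen.cases_head hr with heq | ⟨c, hc, _⟩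
  · exact heq
  · exact absurd hc (hw c)

theorem no_descending {α : Type*} {r : α → α → Prop} (h : WellFounded r) (f : ℕ → α)
    (hf : ∀ n, r (f (n + 1)) (f n)) : False := by
  have key : ∀ a, ∀ g : ℕ → α, g 0 = a → ¬ (∀ n, r (g (n + 1)) (g n)) := by
    intro a
    refine h.induction (C := fun a => ∀ g : ℕ → α, g 0 = a → ¬ (∀ n, r (g (n + 1)) (g n))) a ?_
    intro a ih g h0 hg
    exact ih (g 1) (h0 ▸ hg 0) (fun n => g (n + 1)) rfl (fun n => hg (n + 1))
  exact key (f 0) f rfl hf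

theorem terminating_always (hlt : IsMonomialOrder lt) (S : Set (M X × M X)) :
    Terminating lt S := by
  rintro ⟨f, hf⟩
  exact no_descending hlt.1 f (fun n => Rew_lt hlt (hf n))

theorem church_rosser (hc : Confluent lt S) {a b : M X}
    (h : Relation.EqvGen (Rew lt S) a b) : Joinable lt S a b := by
  induction h with
  | rel a b h => exact ⟨b, .single h, .refl⟩
  | refl a => exact ⟨a, .refl, .refl⟩
  | symm _ _ _ ih => obtain ⟨k, h1, h2⟩ := ih; exact ⟨k, h2, h1⟩
  | trans a b c _ _ ih1 ih2 =>
    obtain ⟨k1, ha1, hb1⟩ := ih1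
    obtain ⟨k2, hb2, hc2⟩ := ih2
    obtain ⟨k, hk1, hk2⟩ := hc b k1 k2 hb1 hb2
    exact ⟨k, ha1.trans hk1, hc2.trans hk2⟩

end Aux2


/-- `Irr(S)` is a section of `⟨S⟩` iff `Π_S` is convergent. -/
theorem irr_section_iff_convergent (X : Type) (lt : M X → M X → Prop)
    (hlt : IsMonomialOrder lt) (S : Set (M X × M X)) :
    IsSection S (Irr lt S) ↔ (Terminating lt S ∧ Confluent lt S) := by
  constructor
  · intro hsec
    refine ⟨terminating_always hlt S, ?_⟩
    intro f g h hg hh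
    obtain ⟨g', hg'i, hg'r⟩ := exists_nf hlt S g
    obtain ⟨h', hh'i, hh'r⟩ := exists_nf hlt S h
    obtain ⟨w, _, huniq⟩ := hsec f
    have e1 : g' = w := huniq g' ⟨hg'i, rtg_ocong (hg.trans hg'r)⟩
    have e2 : h' = w := huniq h' ⟨hh'i, rtg_ocong (hh.trans hh'r)⟩
    have e3 : h' = g' := e2.trans e1.symm
    exact ⟨g', hg'r, e3 ▸ hh'r⟩
  · rintro ⟨_, hconf⟩ a
    obtain ⟨w, hwi, hwr⟩ := exists_nf hlt S a
    refine ⟨w, ⟨hwi, rtg_ocong hwr⟩, ?_⟩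
    rintro y ⟨hyi, hy⟩
    have hyw : (y, w) ∈ ocong S := by
      have hc := ocong_isOpCong S
      exact hc.2.2.1 _ _ _ (hc.2.1 _ _ hy) (rtg_ocong hwr)
    have heq : Relation.EqvGen (Rew lt S) y w := ocong_subset_eqvGen hlt hyw
    obtain ⟨k, hk1, hk2⟩ := church_rosser hconf heq
    rw [irr_no_step hyi hk1, irr_no_step hwi hk2]


end OpMon
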